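/- arXiv:2304.01224 — 10 statements merged into one kernel-verified Lean document; each statement's English description precedes it below -/
import Mathlib

section
/- The Shapley–Taylor pair-interaction index for the KNN valuation function satisfies φ_{ij}(u) = (2/n)·Σ_{s=k-1}^{n-2} (1/C(n-1,s))·Σ_{S⊆N∖{i,j}, |S|=s} [u(S∪{i,j}) - u(S∪{i}) - u(S∪{j}) + u(S)], i.e., the terms with |S| ≤ k-2 in the defining sum vanish. -/
/-! Up to k points the KNN valuation is additive, `u T = ∑ x ∈ T, 1[m x] / k`, and the second
difference of an additive set function vanishes. Hence every term of the defining sum with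
`|S| + 2 ≤ k` is zero, and grouping the remaining subsets by size gives the claim. -/

open Finset

/-- KNN valuation function: fraction (out of k) of label matches among the
min(k,|S|) smallest-index (closest) elements of S. `m i` says whether train
point i's label matches the test label. -/
noncomputable def knnVal (k : ℕ) (m : ℕ → Bool) (S : Finset ℕ) : ℝ :=
  (((S.sort (· ≤ ·)).take k).countP m : ℝ) / k

/-- Discrete second difference of a set function. -/
noncomputable def secondDiff (u : Finset ℕ → ℝ) (S : Finset ℕ) (i j : ℕ) : ℝ :=
  u (S ∪ {i, j}) - u (S ∪ {i}) - u (S ∪ {j}) + u S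

/-- Shapley–Taylor pair-interaction index on N = {1,…,n}. -/
noncomputable def sti (n : ℕ) (u : Finset ℕ → ℝ) (i j : ℕ) : ℝ :=
  (2 / n) * ∑ S ∈ ((Finset.Icc 1 n) \ {i, j}).powerset,
    (1 / ((n - 1).choose S.card) : ℝ) * secondDiff u S i j

lemma knnVal_of_card_le {k : ℕ} (m : ℕ → Bool) {T : Finset ℕ} (hT : T.card ≤ k) :
    knnVal k m T = ∑ x ∈ T, (if m x then 1 else 0 : ℝ) / k := by
  have hcount : (T.sort (· ≤ ·)).countP m = (T.filter (fun x => m x)).card := by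
    have h := Multiset.coe_countP (fun x => m x = true) (T.sort (· ≤ ·))
    simp only [Bool.decide_eq_true, Finset.sort_eq] at h
    rw [← h, Multiset.countP_eq_card_filter]
    rfl
  rw [knnVal, List.take_of_length_le (by rwa [Finset.length_sort]), hcount, Finset.card_filter,
    ← Finset.sum_div]
  push_cast
  rfl

lemma secondDiff_eq_zero_of_eq_sum {u : Finset ℕ → ℝ} (g : ℕ → ℝ) {S : Finset ℕ} {i j : ℕ}
    (hu : ∀ T ⊆ S ∪ {i, j}, u T = ∑ x ∈ T, g x) (hi : i ∉ S) (hj : j ∉ S) (hij : i ≠ j) :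
    secondDiff u S i j = 0 := by
  have hiS : S ∪ {i} ⊆ S ∪ {i, j} := by grind
  have hjS : S ∪ {j} ⊆ S ∪ {i, j} := by grind
  rw [secondDiff, hu _ subset_rfl, hu _ hiS, hu _ hjS, hu _ Finset.subset_union_left,
    Finset.union_insert, Finset.union_singleton, Finset.union_singleton,
    Finset.sum_insert (by simp [hij, hi]), Finset.sum_insert hj, Finset.sum_insert hi]
  ring

lemma secondDiff_knnVal_eq_zero (k : ℕ) (m : ℕ → Bool) {S : Finset ℕ} {i j : ℕ}
    (hi : i ∉ S) (hj : j ∉ S) (hij : i ≠ j) (hS : S.card + 2 ≤ k) :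
    secondDiff (knnVal k m) S i j = 0 :=
  secondDiff_eq_zero_of_eq_sum _ (fun _ hT => knnVal_of_card_le m <|
    (Finset.card_le_card hT).trans <| (Finset.card_union_le _ _).trans <|
      (add_le_add_right Finset.card_le_two _).trans hS) hi hj hij

lemma Finset.sum_powerset_mul_eq_sum_Icc {α β : Type*} [NonUnitalNonAssocSemiring β]
    (A : Finset α) (w : ℕ → β) (f : Finset α → β) {a : ℕ} (hf : ∀ S ⊆ A, S.card < a → f S = 0) :
    ∑ S ∈ A.powerset, w S.card * f S =
      ∑ s ∈ Icc a A.card, w s * ∑ S ∈ A.powersetCard s, f S := by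
  have hsmall : ∀ s < a, ∑ S ∈ A.powersetCard s, w S.card * f S = 0 := fun s hs =>
    Finset.sum_eq_zero fun S hS => by
      obtain ⟨hSA, rfl⟩ := Finset.mem_powersetCard.mp hS
      rw [hf S hSA hs, mul_zero]
  rw [Finset.sum_powerset]
  refine (Finset.sum_subset (fun s hs => by simp at hs ⊢; omega) fun s hs hs' =>
    hsmall s ?_).symm.trans (Finset.sum_congr rfl fun s _ => ?_)
  · simp at hs hs'
    omega
  · rw [Finset.mul_sum]
    exact Finset.sum_congr rfl fun S hS => by rw [(Finset.mem_powersetCard.mp hS).2]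

lemma card_Icc_sdiff_pair {n i j : ℕ} (hi : i ∈ Icc 1 n) (hj : j ∈ Icc 1 n) (hij : i ≠ j) :
    (Icc 1 n \ {i, j}).card = n - 2 := by
  rw [Finset.card_sdiff_of_subset (Finset.insert_subset hi (Finset.singleton_subset_iff.mpr hj)),
    Finset.card_pair hij, Nat.card_Icc, Nat.add_sub_cancel]

theorem sti_knn_restricted_sum_general (n k : ℕ) (m : ℕ → Bool) (i j : ℕ)
    (hi : i ∈ Finset.Icc 1 n) (hj : j ∈ Finset.Icc 1 n) (hij : i ≠ j) :
    sti n (knnVal k m) i j =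
      (2 / n) * ∑ s ∈ Finset.Icc (k - 1) (n - 2),
        (1 / ((n - 1).choose s) : ℝ) *
          ∑ S ∈ (Finset.Icc 1 n \ {i, j}).powersetCard s,
            secondDiff (knnVal k m) S i j := by
  rw [sti, ← card_Icc_sdiff_pair hi hj hij]
  congr 1
  refine Finset.sum_powerset_mul_eq_sum_Icc _ (fun s => 1 / ((n - 1).choose s : ℝ)) _
    fun S hS hSk => secondDiff_knnVal_eq_zero k m (fun h => by simpa using hS h)
      (fun h => by simpa using hS h) hij (by omega)

theorem sti_knn_restricted_sum (n k : ℕ) (m : ℕ → Bool) (i j : ℕ)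
    (hk : 1 ≤ k) (hkn : k ≤ n)
    (hi : i ∈ Finset.Icc 1 n) (hj : j ∈ Finset.Icc 1 n) (hij : i ≠ j) :
    sti n (knnVal k m) i j =
      (2 / n) * ∑ s ∈ Finset.Icc (k - 1) (n - 2),
        (1 / ((n - 1).choose s) : ℝ) *
          ∑ S ∈ (Finset.Icc 1 n \ {i, j}).powersetCard s,
            secondDiff (knnVal k m) S i j :=
  sti_knn_restricted_sum_general n k m i j hi hj hij
end

section
/- For the KNN valuation function u with parameter k ≤ n, the Shapley–Taylor interaction between the two farthest training points equals φ_{n-1,n}(u) = -[2(n-k)/(n(n-1))]·u(n), where u(n) = 1[y_n = y_test]/k. -/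
open Finset

/-!
Write `u = knnVal k m`. Adding to `S` a point `a` farther than every point of `S` adds `u {a}` if
`S` has fewer than `k` points and leaves it unchanged otherwise. So for `S` below `i < j`, the
second difference at `(i, j)` is `-u {j}` when `|S| = k - 1` and vanishes otherwise, and the
Shapley–Taylor sum for `(n - 1, n)` collapses to `C(n-2, k-1)` equal terms, with
`C(n-2, k-1) / C(n-1, k-1) = (n - k) / (n - 1)`.
-/

theorem Finset.sort_insert_of_forall_lt {α : Type*} [LinearOrder α] {s : Finset α} {a : α}
    (h : ∀ b ∈ s, b < a) : (insert a s).sort (· ≤ ·) = s.sort (· ≤ ·) ++ [a] := by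
  have ha : a ∉ s := fun ha => (h a ha).false
  have hnodup : (s.sort (· ≤ ·) ++ [a]).Nodup := by
    simpa [List.nodup_append] using ha
  have hset : (s.sort (· ≤ ·) ++ [a]).toFinset = insert a s := by
    ext; simp
  rw [← hset, List.toFinset_sort _ hnodup, List.pairwise_append]
  refine ⟨s.pairwise_sort _, List.pairwise_singleton _ a, ?_⟩
  simp only [mem_sort, List.mem_singleton, forall_eq]
  exact fun b hb => (h b hb).le

theorem Nat.cast_choose_div_cast_choose_succ {K : Type*} [Field K] [CharZero K] {m r : ℕ}
    (hr : r ≤ m + 1) :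
    (m.choose r : K) / (m + 1).choose r = ((m + 1 - r : ℕ) : K) / (m + 1) := by
  have hpos : ((m + 1).choose r : K) ≠ 0 := by exact_mod_cast (Nat.choose_pos hr).ne'
  rw [div_eq_div_iff hpos (Nat.cast_add_one_ne_zero m), mul_comm (((m + 1 - r : ℕ) : K))]
  exact_mod_cast Nat.choose_mul_succ_eq m r

theorem sti_eq_of_secondDiff_eq_ite_card {n i j r : ℕ} {u : Finset ℕ → ℝ} {c : ℝ}
    (hi : i ∈ Icc 1 n) (hj : j ∈ Icc 1 n) (hij : i ≠ j)
    (h : ∀ S ⊆ Icc 1 n \ {i, j}, secondDiff u S i j = if S.card = r then c else 0) :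
    sti n u i j = 2 / n * ((n - 2).choose r / (n - 1).choose r) * c := by
  have hcard : (Icc 1 n \ {i, j}).card = n - 2 := by
    rw [card_sdiff_of_subset (insert_subset hi (singleton_subset_iff.2 hj)), card_pair hij,
      Nat.card_Icc, Nat.add_sub_cancel]
  have hterm : ∀ S ∈ (Icc 1 n \ {i, j}).powerset,
      (1 / ((n - 1).choose S.card) : ℝ) * secondDiff u S i j
        = if S.card = r then 1 / ((n - 1).choose r : ℝ) * c else 0 := by
    intro S hS
    rw [h S (mem_powerset.1 hS)]
    split_ifs with hSr <;> simp [hSr]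
  rw [sti, sum_congr rfl hterm, ← sum_filter, ← powersetCard_eq_filter, sum_const,
    card_powersetCard, hcard, nsmul_eq_mul]
  ring

section knn

variable {k : ℕ} {m : ℕ → Bool}

theorem knnVal_singleton (a : ℕ) : knnVal k m {a} = (if m a then 1 else 0) / k := by
  rcases k with _ | k
  · simp [knnVal]
  · cases hma : m a <;> simp [knnVal, hma]

theorem knnVal_insert_of_forall_lt {S : Finset ℕ} {a : ℕ} (h : ∀ x ∈ S, x < a) :
    knnVal k m (insert a S) = knnVal k m S + if S.card < k then knnVal k m {a} else 0 := by
  simp only [knnVal, sort_insert_of_forall_lt h, List.take_append, List.countP_append,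
    length_sort, sort_singleton]
  split_ifs with hSk
  · rw [List.take_of_length_le (l := S.sort (· ≤ ·)) (by rw [length_sort]; omega),
      List.take_of_length_le (l := [a]) (by rw [List.length_singleton]; omega),
      List.take_of_length_le (l := [a]) (by rw [List.length_singleton]; omega), Nat.cast_add,
      add_div]
  · rw [Nat.sub_eq_zero_of_le (by omega)]
    simp

theorem secondDiff_knnVal {S : Finset ℕ} {i j : ℕ} (hij : i < j) (hS : ∀ x ∈ S, x < i) :
    secondDiff (knnVal k m) S i j = if S.card + 1 = k then -knnVal k m {j} else 0 := by
  have hSj : ∀ x ∈ S, x < j := fun x hx => (hS x hx).trans hij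
  have hiS : ∀ x ∈ insert i S, x < j := by
    simpa only [mem_insert, forall_eq_or_imp] using ⟨hij, hSj⟩
  have hpair : S ∪ {i, j} = insert j (insert i S) := by
    ext; simp only [mem_union, mem_insert, mem_singleton]; tauto
  rw [secondDiff, hpair, union_singleton, union_singleton, knnVal_insert_of_forall_lt hiS,
    knnVal_insert_of_forall_lt hS, knnVal_insert_of_forall_lt hSj,
    card_insert_of_notMem fun hi => (hS i hi).false]
  split_ifs <;> first | ring1 | (exfalso; omega)

end knn

theorem sti_knn_last_term (n k : ℕ) (m : ℕ → Bool)
    (hk : 1 ≤ k) (hkn : k ≤ n) (hn : 2 ≤ n) :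
    sti n (knnVal k m) (n - 1) n =
      -(2 * ((n : ℝ) - k) / ((n : ℝ) * ((n : ℝ) - 1))) *
        ((if m n then (1 : ℝ) else 0) / k) := by
  have hsecond : ∀ S ⊆ Icc 1 n \ {n - 1, n}, secondDiff (knnVal k m) S (n - 1) n
      = if S.card = k - 1 then -knnVal k m {n} else 0 := by
    intro S hS
    have hlt : ∀ x ∈ S, x < n - 1 := fun x hx => by
      have := hS hx
      simp only [mem_sdiff, mem_Icc, mem_insert, mem_singleton] at this
      omega
    rw [secondDiff_knnVal (by omega) hlt]
    simp only [show S.card + 1 = k ↔ S.card = k - 1 by omega]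
  have hratio : ((n - 2).choose (k - 1) : ℝ) / (n - 1).choose (k - 1) = (n - k) / (n - 1) := by
    rw [show n - 1 = n - 2 + 1 by omega, Nat.cast_choose_div_cast_choose_succ (by omega),
      show n - 2 + 1 - (k - 1) = n - k by omega]
    push_cast [hkn, hn]
    ring
  rw [sti_eq_of_secondDiff_eq_ite_card (mem_Icc.2 ⟨by omega, by omega⟩)
    (mem_Icc.2 ⟨by omega, by omega⟩) (by omega) hsecond,
    hratio, knnVal_singleton]
  field_simp
end

section
/- For any set function u on subsets of N = {1,…,n} and pairwise distinct i, j, q, the difference of Shapley–Taylor interaction indices satisfies φ_{ij}(u) - φ_{iq}(u) = (2/n)·Σ_{S⊆N∖{i,j,q}} [1/C(n-1,|S|) + 1/C(n-1,|S|+1)]·[u(S∪{i,j}) - u(S∪{i,q}) - u(S∪{j}) + u(S∪{q})]. -/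
open Finset

theorem sti_diff_identity (n : ℕ) (u : Finset ℕ → ℝ) (i j q : ℕ)
    (hi : i ∈ Finset.Icc 1 n) (hj : j ∈ Finset.Icc 1 n) (hq : q ∈ Finset.Icc 1 n)
    (hij : i ≠ j) (hiq : i ≠ q) (hjq : j ≠ q) :
    sti n u i j - sti n u i q =
      (2 / n) * ∑ S ∈ ((Finset.Icc 1 n) \ {i, j, q}).powerset,
        ((1 / ((n - 1).choose S.card) : ℝ) + 1 / ((n - 1).choose (S.card + 1))) *
          (u (S ∪ {i, j}) - u (S ∪ {i, q}) - u (S ∪ {j}) + u (S ∪ {q})) := by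
  set T : Finset ℕ := (Finset.Icc 1 n) \ {i, j, q} with hT
  have hqT : q ∉ T := by simp [hT]
  have hjT : j ∉ T := by simp [hT]
  have h1 : ((Finset.Icc 1 n) \ {i, j} : Finset ℕ) = insert q T := by
    ext x
    simp only [hT, mem_sdiff, mem_insert, mem_singleton]
    rcases eq_or_ne x q with rfl | hx
    · simp [hq, Ne.symm hiq, Ne.symm hjq]
    · simp [hx]
  have h2 : ((Finset.Icc 1 n) \ {i, q} : Finset ℕ) = insert j T := by
    ext x
    simp only [hT, mem_sdiff, mem_insert, mem_singleton]
    rcases eq_or_ne x j with rfl | hx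
    · simp [hj, Ne.symm hij, hjq]
    · simp [hx]
  rw [sti, sti, h1, h2, Finset.sum_powerset_insert hqT, Finset.sum_powerset_insert hjT,
    ← mul_sub]
  congr 1
  rw [add_sub_add_comm, ← Finset.sum_sub_distrib, ← Finset.sum_sub_distrib,
    ← Finset.sum_add_distrib]
  refine Finset.sum_congr rfl fun S hS => ?_
  rw [Finset.mem_powerset] at hS
  have hqS : q ∉ S := fun h => hqT (hS h)
  have hjS : j ∉ S := fun h => hjT (hS h)
  have cq : (insert q S).card = S.card + 1 := Finset.card_insert_of_notMem hqS
  have cj : (insert j S).card = S.card + 1 := Finset.card_insert_of_notMem hjS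
  have e1 : insert q S ∪ ({i, j} : Finset ℕ) = insert j S ∪ {i, q} := by
    ext x; simp; tauto
  have e2 : insert q S ∪ ({i} : Finset ℕ) = S ∪ {i, q} := by
    ext x; simp; tauto
  have e3 : insert j S ∪ ({i} : Finset ℕ) = S ∪ {i, j} := by
    ext x; simp; tauto
  have e4 : insert j S ∪ ({q} : Finset ℕ) = insert q S ∪ {j} := by
    ext x; simp; tauto
  have e5 : insert j S = S ∪ {j} := by ext x; simp
  have e6 : insert q S = S ∪ {q} := by ext x; simp
  simp only [secondDiff, cq, cj, e1, e2, e3, e4]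
  rw [show u (insert j S) = u (S ∪ {j}) from by rw [e5],
    show u (insert q S) = u (S ∪ {q}) from by rw [e6]]
  ring
end

section
/- For the KNN valuation function u with parameter k and distinct i,j,q, the difference φ_{ij}(u) - φ_{iq}(u) equals (2/n)·Σ_{s=k-1}^{n-3} [1/C(n-1,s) + 1/C(n-1,s+1)]·Σ_{S⊆N∖{i,j,q}, |S|=s} [u(S∪{i,j}) - u(S∪{i,q}) - u(S∪{j}) + u(S∪{q})], i.e., terms with |S| ≤ k-2 vanish. -/
/-!
Split the subsets of `N ∖ {i, j}` according to whether they contain `q`, and those of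
`N ∖ {i, q}` according to whether they contain `j`. Both indices then become sums over
`S ⊆ N ∖ {i, j, q}`, and the terms for `S` and for `S ∪ {q}` (resp. `S ∪ {j}`) combine to the
same expression `crossDiff u S i j q`, with weights `1 / C(n-1, |S|)` and `1 / C(n-1, |S|+1)`.
For the KNN value all four sets in `crossDiff` have at most `|S| + 2` elements, so when
`|S| + 2 ≤ k` the value is additive on them and the expression cancels.
-/

open Finset

variable {α β : Type*}

lemma Finset.sum_powerset_insert_card [DecidableEq α] [AddCommMonoid β] {s : Finset α} {a : α}
    (ha : a ∉ s) (f : ℕ → Finset α → β) :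
    ∑ t ∈ (insert a s).powerset, f #t t =
      ∑ t ∈ s.powerset, (f #t t + f (#t + 1) (insert a t)) := by
  rw [sum_powerset_insert ha, ← sum_add_distrib]
  refine sum_congr rfl fun t ht => ?_
  rw [card_insert_of_notMem fun h => ha (mem_powerset.1 ht h)]

lemma Finset.sum_powerset_card_mul [NonUnitalNonAssocSemiring β] (s : Finset α) (w : ℕ → β)
    (g : Finset α → β) :
    ∑ t ∈ s.powerset, w #t * g t = ∑ r ∈ range (#s + 1), w r * ∑ t ∈ s.powersetCard r, g t := by
  rw [sum_powerset]
  refine sum_congr rfl fun r _ => ?_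
  rw [mul_sum]
  exact sum_congr rfl fun t ht => by rw [(mem_powersetCard.1 ht).2]

lemma Finset.sdiff_eq_insert_sdiff_insert [DecidableEq α] {s c : Finset α} {a : α} (ha : a ∈ s)
    (hac : a ∉ c) : s \ c = insert a (s \ insert a c) := by
  ext x
  by_cases hx : x = a <;> simp_all

noncomputable def crossDiff (u : Finset ℕ → ℝ) (S : Finset ℕ) (i j q : ℕ) : ℝ :=
  u (S ∪ {i, j}) - u (S ∪ {i, q}) - u (S ∪ {j}) + u (S ∪ {q})

section crossDiff

variable (u : Finset ℕ → ℝ) (S : Finset ℕ) (i j q : ℕ)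

lemma secondDiff_sub_secondDiff :
    secondDiff u S i j - secondDiff u S i q = crossDiff u S i j q := by
  unfold secondDiff crossDiff
  ring

lemma secondDiff_insert_sub_secondDiff_insert :
    secondDiff u (insert q S) i j - secondDiff u (insert j S) i q = crossDiff u S i j q := by
  obtain ⟨e1, e2, e3, e4⟩ : insert q S ∪ {i, j} = insert j S ∪ {i, q} ∧
      insert q S ∪ {i} = S ∪ {i, q} ∧ insert q S ∪ {j} = insert j S ∪ {q} ∧
      insert j S ∪ {i} = S ∪ {i, j} := by
    refine ⟨?_, ?_, ?_, ?_⟩ <;> ext <;> simp only [mem_union, mem_insert, mem_singleton] <;> tauto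
  unfold secondDiff crossDiff
  rw [e1, e2, e3, e4, ← union_singleton q S, ← union_singleton j S]
  ring

lemma crossDiff_congr_of_card_le {v : Finset ℕ → ℝ} (h : ∀ T : Finset ℕ, #T ≤ #S + 2 → u T = v T) :
    crossDiff u S i j q = crossDiff v S i j q := by
  have hle : ∀ t : Finset ℕ, #t ≤ 2 → #(S ∪ t) ≤ #S + 2 := fun t ht =>
    (card_union_le S t).trans (by omega)
  unfold crossDiff
  rw [h _ (hle _ card_le_two), h _ (hle _ card_le_two), h _ (hle _ (by simp)),
    h _ (hle _ (by simp))]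

variable {S i j q}

lemma crossDiff_sum_eq_zero (f : ℕ → ℝ) (hi : i ∉ S) (hj : j ∉ S) (hq : q ∉ S) (hij : i ≠ j)
    (hiq : i ≠ q) : crossDiff (fun T => ∑ x ∈ T, f x) S i j q = 0 := by
  simp only [crossDiff]
  rw [sum_union (by simp [hi, hj]), sum_union (by simp [hi, hq]), sum_union (by simp [hj]),
    sum_union (by simp [hq]), sum_pair hij, sum_pair hiq, sum_singleton, sum_singleton]
  ring

end crossDiff

lemma knnVal_eq_sum_of_card_le (k : ℕ) (m : ℕ → Bool) {S : Finset ℕ} (h : #S ≤ k) :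
    knnVal k m S = ∑ x ∈ S, (if m x then 1 else 0 : ℝ) / k := by
  rw [knnVal, List.take_of_length_le (by simpa using h), ← sum_div, sum_boole]
  congr 2
  rw [card_def, filter_val, ← Multiset.countP_eq_card_filter, ← sort_eq S (· ≤ ·),
    Multiset.coe_countP]
  simp

lemma knnVal_crossDiff_eq_zero (k : ℕ) (m : ℕ → Bool) {S : Finset ℕ} {i j q : ℕ}
    (hS : #S + 2 ≤ k) (hi : i ∉ S) (hj : j ∉ S) (hq : q ∉ S) (hij : i ≠ j) (hiq : i ≠ q) :
    crossDiff (knnVal k m) S i j q = 0 := by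
  rw [crossDiff_congr_of_card_le _ _ _ _ _ fun T hT => knnVal_eq_sum_of_card_le k m (by omega)]
  exact crossDiff_sum_eq_zero _ hi hj hq hij hiq

lemma sti_eq_sum_powerset_insert (n : ℕ) (u : Finset ℕ → ℝ) {i j q : ℕ} (hq : q ∈ Icc 1 n)
    (hqij : q ∉ ({i, j} : Finset ℕ)) :
    sti n u i j = (2 / n) * ∑ T ∈ (Icc 1 n \ insert q {i, j}).powerset,
      ((1 / (n - 1).choose #T : ℝ) * secondDiff u T i j
        + 1 / (n - 1).choose (#T + 1) * secondDiff u (insert q T) i j) := by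
  rw [sti, sdiff_eq_insert_sdiff_insert hq hqij,
    sum_powerset_insert_card (by simp) fun r T => (1 / (n - 1).choose r : ℝ) * secondDiff u T i j]

lemma sti_sub_sti (n : ℕ) (u : Finset ℕ → ℝ) {i j q : ℕ} (hj : j ∈ Icc 1 n)
    (hq : q ∈ Icc 1 n) (hij : i ≠ j) (hiq : i ≠ q) (hjq : j ≠ q) :
    sti n u i j - sti n u i q = (2 / n) * ∑ T ∈ (Icc 1 n \ {i, j, q}).powerset,
      ((1 / (n - 1).choose #T : ℝ) + 1 / (n - 1).choose (#T + 1)) * crossDiff u T i j q := by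
  have e1 : insert q {i, j} = ({i, j, q} : Finset ℕ) := by
    ext; simp only [mem_insert, mem_singleton]; tauto
  have e2 : insert j {i, q} = ({i, j, q} : Finset ℕ) := by
    ext; simp only [mem_insert, mem_singleton]; tauto
  rw [sti_eq_sum_powerset_insert n u hq (by simp [hiq.symm, hjq.symm]),
    sti_eq_sum_powerset_insert n u hj (by simp [hij.symm, hjq]), e1, e2, ← mul_sub,
    ← sum_sub_distrib]
  congr 1
  refine sum_congr rfl fun T _ => ?_
  linear_combination (1 / (n - 1).choose #T : ℝ) * secondDiff_sub_secondDiff u T i j q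
    + (1 / (n - 1).choose (#T + 1) : ℝ) * secondDiff_insert_sub_secondDiff_insert u T i j q

theorem sti_knn_diff_restricted_general (n k : ℕ) (m : ℕ → Bool) (i j q : ℕ)
    (hi : i ∈ Finset.Icc 1 n) (hj : j ∈ Finset.Icc 1 n) (hq : q ∈ Finset.Icc 1 n)
    (hij : i ≠ j) (hiq : i ≠ q) (hjq : j ≠ q) :
    sti n (knnVal k m) i j - sti n (knnVal k m) i q =
      (2 / n) * ∑ s ∈ Finset.Icc (k - 1) (n - 3),
        ((1 / ((n - 1).choose s) : ℝ) + 1 / ((n - 1).choose (s + 1))) *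
          ∑ S ∈ ((Finset.Icc 1 n) \ {i, j, q}).powersetCard s,
            (knnVal k m (S ∪ {i, j}) - knnVal k m (S ∪ {i, q})
              - knnVal k m (S ∪ {j}) + knnVal k m (S ∪ {q})) := by
  have hcard : #(Icc 1 n \ {i, j, q}) = n - 3 := by
    rw [card_sdiff_of_subset (by simp [insert_subset_iff, *]), Nat.card_Icc,
      card_insert_of_notMem (by simp [hij, hiq]), card_pair hjq]
    omega
  rw [sti_sub_sti n _ hj hq hij hiq hjq, sum_powerset_card_mul _
    (fun r => (1 / (n - 1).choose r : ℝ) + 1 / (n - 1).choose (r + 1)) (crossDiff _ · i j q), hcard]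
  congr 1
  refine (sum_subset (fun s hs => ?_) fun s hs hsIcc => ?_).symm
  · simp only [mem_Icc, mem_range] at hs ⊢
    omega
  have hsk : s + 2 ≤ k := by
    simp only [mem_Icc, mem_range] at hs hsIcc
    omega
  rw [sum_eq_zero, mul_zero]
  intro S hS
  obtain ⟨hSB, hScard⟩ := mem_powersetCard.1 hS
  have hnot : ∀ x ∈ ({i, j, q} : Finset ℕ), x ∉ S := fun x hx hxS => (mem_sdiff.1 (hSB hxS)).2 hx
  exact knnVal_crossDiff_eq_zero k m (hScard ▸ hsk) (hnot i (by simp)) (hnot j (by simp))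
    (hnot q (by simp)) hij hiq

theorem sti_knn_diff_restricted (n k : ℕ) (m : ℕ → Bool) (i j q : ℕ)
    (hk : 1 ≤ k) (hkn : k ≤ n)
    (hi : i ∈ Finset.Icc 1 n) (hj : j ∈ Finset.Icc 1 n) (hq : q ∈ Finset.Icc 1 n)
    (hij : i ≠ j) (hiq : i ≠ q) (hjq : j ≠ q) :
    sti n (knnVal k m) i j - sti n (knnVal k m) i q =
      (2 / n) * ∑ s ∈ Finset.Icc (k - 1) (n - 3),
        ((1 / ((n - 1).choose s) : ℝ) + 1 / ((n - 1).choose (s + 1))) *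
          ∑ S ∈ ((Finset.Icc 1 n) \ {i, j, q}).powersetCard s,
            (knnVal k m (S ∪ {i, j}) - knnVal k m (S ∪ {i, q})
              - knnVal k m (S ∪ {j}) + knnVal k m (S ∪ {q})) :=
  sti_knn_diff_restricted_general n k m i j q hi hj hq hij hiq hjq
end

section
/- For the KNN valuation function u with parameter k, and any j with 3 ≤ j ≤ n, the Shapley–Taylor interaction indices satisfy the recursion: φ_{j-2,j-1}(u) = φ_{j-1,j}(u) + [2(j-k-1)/((j-2)(j-1))]·(u(j) - u(j-1)) if j > k+1, and φ_{j-2,j-1}(u) = φ_{j-1,j}(u) if j ≤ k+1. -/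
open Finset

/-!
Write `a, b, c = j - 2, j - 1, j`. Splitting the subsets in the sum for `φ_{a,b}` according to
whether they contain `c`, and those for `φ_{b,c}` according to whether they contain `a`, pairs the
terms by a set `R` with no point in `[a, c]`. Along `R = L ∪ H` with `L < a < c < H`, the KNN count
splits into the count on `L`, the count on the inserted points, and the count on `H`, and the last
depends only on how many points were inserted. So in the difference of the paired second
differences the `H` part cancels, leaving `u(c) - u(b)` exactly when `|L| = k - 1`. What remains is
the total Shapley–Taylor weight of these sets, a Beta-type binomial sum:
`∑_{T ⊆ s} 1 / C(N + |s|, p + |T|) = (N + |s| + 1) / ((N + 1) C(N, p))`.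
-/

def knnCount (m : ℕ → Bool) (s : Finset ℕ) (r : ℕ) : ℕ :=
  ((s.sort (· ≤ ·)).take r).countP m

theorem knnVal_eq_knnCount (k : ℕ) (m : ℕ → Bool) (s : Finset ℕ) :
    knnVal k m s = knnCount m s k / k := rfl

theorem knnCount_insert_of_forall_lt {m : ℕ → Bool} {s : Finset ℕ} {x : ℕ}
    (h : ∀ y ∈ s, x < y) (r : ℕ) :
    knnCount m (insert x s) r =
      knnCount m s (r - 1) + if r = 0 then 0 else if m x then 1 else 0 := by
  unfold knnCount
  rw [sort_insert _ (fun y hy => (h y hy).le) (fun hx => (h x hx).false)]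
  cases r <;> simp [List.countP_cons]

theorem knnCount_union_of_forall_lt {m : ℕ → Bool} {s t : Finset ℕ}
    (h : ∀ x ∈ s, ∀ y ∈ t, x < y) (r : ℕ) :
    knnCount m (s ∪ t) r = knnCount m s r + knnCount m t (r - #s) := by
  induction s using Finset.induction_on_min generalizing r with
  | empty => simp [knnCount]
  | insert a s ha ih =>
    have hst : ∀ y ∈ s ∪ t, a < y := by
      simp only [mem_union]
      rintro y (hy | hy)
      · exact ha y hy
      · exact h a (mem_insert_self a s) y hy
    rw [insert_union, knnCount_insert_of_forall_lt hst, knnCount_insert_of_forall_lt ha,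
      ih (fun x hx => h x (mem_insert_of_mem hx)),
      card_insert_of_notMem (fun h => (ha a h).false), Nat.sub_sub, add_comm 1 #s]
    ring

theorem secondDiff_knnVal_union {k : ℕ} {m : ℕ → Bool} {L H : Finset ℕ} {a b : ℕ}
    (hab : a < b) (hL : ∀ x ∈ L, x < a) (hH : ∀ y ∈ H, b < y) :
    secondDiff (knnVal k m) (L ∪ H) a b =
      ((knnCount m H (k - #L - 2) : ℝ) - 2 * knnCount m H (k - #L - 1) + knnCount m H (k - #L)
        - if k - #L = 1 then (if m b then 1 else 0) else 0) / k := by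
  have hL' : ∀ T : Finset ℕ, (∀ y ∈ T, a ≤ y) → ∀ x ∈ L, ∀ y ∈ T, x < y :=
    fun T hT x hx y hy => (hL x hx).trans_le (hT y hy)
  have e_ab : L ∪ H ∪ {a, b} = L ∪ insert a (insert b H) := by
    ext; simp only [mem_union, mem_insert, mem_singleton]; tauto
  have e_a : L ∪ H ∪ {a} = L ∪ insert a H := by
    ext; simp only [mem_union, mem_insert, mem_singleton]; tauto
  have e_b : L ∪ H ∪ {b} = L ∪ insert b H := by
    ext; simp only [mem_union, mem_insert, mem_singleton]; tauto
  simp only [secondDiff, knnVal_eq_knnCount, e_ab, e_a, e_b]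
  rw [knnCount_union_of_forall_lt (hL' _ (by grind)), knnCount_union_of_forall_lt (hL' _ (by grind)),
    knnCount_union_of_forall_lt (hL' _ (by grind)), knnCount_union_of_forall_lt (hL' _ (by grind)),
    knnCount_insert_of_forall_lt (by grind), knnCount_insert_of_forall_lt (by grind),
    knnCount_insert_of_forall_lt (by grind), knnCount_insert_of_forall_lt (by grind)]
  generalize k - #L = q
  rcases q with _ | _ | _ | q <;> simp <;> ring

section ConsecutivePairs

variable {k : ℕ} {m : ℕ → Bool} {L H : Finset ℕ} {a b c : ℕ}

theorem secondDiff_knnVal_sub_secondDiff (hab : a < b) (hbc : b < c)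
    (hL : ∀ x ∈ L, x < a) (hH : ∀ y ∈ H, c < y) :
    secondDiff (knnVal k m) (L ∪ H) a b - secondDiff (knnVal k m) (L ∪ H) b c =
      (if #L + 1 = k then (if m c then 1 else 0) - (if m b then 1 else 0) else 0) / k := by
  rw [secondDiff_knnVal_union hab hL (fun y hy => hbc.trans (hH y hy)),
    secondDiff_knnVal_union hbc (fun x hx => (hL x hx).trans hab) hH, ← sub_div]
  congr 1
  split_ifs <;> first | ring1 | (exfalso; omega)

theorem secondDiff_knnVal_insert_sub_secondDiff_insert (hab : a < b) (hbc : b < c)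
    (hL : ∀ x ∈ L, x < a) (hH : ∀ y ∈ H, c < y) :
    secondDiff (knnVal k m) (insert c (L ∪ H)) a b -
        secondDiff (knnVal k m) (insert a (L ∪ H)) b c =
      (if #L + 1 = k then (if m c then 1 else 0) - (if m b then 1 else 0) else 0) / k := by
  rw [← union_insert, ← insert_union,
    secondDiff_knnVal_union hab hL (by grind), secondDiff_knnVal_union hbc (by grind) hH,
    ← sub_div, knnCount_insert_of_forall_lt hH, knnCount_insert_of_forall_lt hH,
    knnCount_insert_of_forall_lt hH, card_insert_of_notMem (fun h => (hL a h).false),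
    ← Nat.sub_sub]
  congr 1
  simp only [show #L + 1 = k ↔ k - #L = 1 by omega]
  generalize k - #L = q
  rcases q with _ | _ | _ | q <;> simp <;> split_ifs <;> ring1

end ConsecutivePairs

theorem inv_choose_succ_add_inv_choose_succ_succ {M s : ℕ} (hs : s ≤ M) :
    ((M + 1).choose s : ℝ)⁻¹ + ((M + 1).choose (s + 1) : ℝ)⁻¹ =
      (M + 2) / ((M + 1) * M.choose s) := by
  have h₁ : ((M + 1).choose (s + 1) : ℝ) * (s + 1) = (M + 1) * M.choose s := by
    exact_mod_cast (Nat.add_one_mul_choose_eq M s).symm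
  have h₂ : ((M + 1).choose s : ℝ) * (M + 1 - s) = M.choose s * (M + 1) := by
    have := congrArg (Nat.cast : ℕ → ℝ) (Nat.choose_mul_succ_eq M s)
    push_cast [Nat.cast_sub (by omega : s ≤ M + 1)] at this
    linarith
  have : ((M + 1).choose s : ℝ) ≠ 0 := by exact_mod_cast (Nat.choose_pos (by omega)).ne'
  have : ((M + 1).choose (s + 1) : ℝ) ≠ 0 := by exact_mod_cast (Nat.choose_pos (by omega)).ne'
  have : (M.choose s : ℝ) ≠ 0 := by exact_mod_cast (Nat.choose_pos hs).ne'
  field_simp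
  linear_combination -((M + 1).choose (s + 1) : ℝ) * h₂ - ((M + 1).choose s : ℝ) * h₁

theorem sum_powerset_inv_choose_succ_add {α : Type*} (s : Finset α) {M p : ℕ}
    (hs : p + #s ≤ M) :
    ∑ t ∈ s.powerset,
        (((M + 1).choose (p + #t) : ℝ)⁻¹ + ((M + 1).choose (p + #t + 1) : ℝ)⁻¹) =
      (M + 2) / (M + 1) * ∑ t ∈ s.powerset, (M.choose (p + #t) : ℝ)⁻¹ := by
  rw [mul_sum]
  refine sum_congr rfl fun t ht => ?_
  have ht : p + #t ≤ M := by have := card_le_card (mem_powerset.1 ht); omega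
  have : (M.choose (p + #t) : ℝ) ≠ 0 := by exact_mod_cast (Nat.choose_pos ht).ne'
  rw [inv_choose_succ_add_inv_choose_succ_succ ht]
  field_simp

theorem sum_powerset_inv_choose {α : Type*} [DecidableEq α] (s : Finset α) {M N p : ℕ}
    (hM : N + #s = M) (hp : p ≤ N) :
    ∑ t ∈ s.powerset, (M.choose (p + #t) : ℝ)⁻¹ = (M + 1) / ((N + 1) * N.choose p) := by
  induction s using Finset.induction_on generalizing M with
  | empty =>
    subst hM
    have : (N.choose p : ℝ) ≠ 0 := by exact_mod_cast (Nat.choose_pos hp).ne'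
    simp only [powerset_empty, card_empty, add_zero, sum_singleton]
    field_simp
  | insert x s hx ih =>
    rw [card_insert_of_notMem hx] at hM
    subst hM
    rw [sum_powerset_insert hx, ← sum_add_distrib]
    calc ∑ t ∈ s.powerset, (((N + #s + 1).choose (p + #t) : ℝ)⁻¹ +
            ((N + #s + 1).choose (p + #(insert x t)) : ℝ)⁻¹)
        = ∑ t ∈ s.powerset, (((N + #s + 1).choose (p + #t) : ℝ)⁻¹ +
            ((N + #s + 1).choose (p + #t + 1) : ℝ)⁻¹) :=
          sum_congr rfl fun t ht => by
            simp only [card_insert_of_notMem fun h => hx (mem_powerset.1 ht h), add_assoc]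
      _ = _ := by
          rw [sum_powerset_inv_choose_succ_add s (by omega), ih rfl]
          push_cast
          field_simp
          ring

theorem sum_powerset_union_of_disjoint {α β : Type*} [DecidableEq α] [AddCommMonoid β]
    {s t : Finset α} (h : Disjoint s t) (f : Finset α → β) :
    ∑ u ∈ (s ∪ t).powerset, f u = ∑ x ∈ s.powerset, ∑ y ∈ t.powerset, f (x ∪ y) := by
  induction t using Finset.induction_on generalizing f with
  | empty => simp
  | insert a t ha ih =>
    obtain ⟨has, hst⟩ := disjoint_insert_right.1 h
    rw [union_insert, sum_powerset_insert (by simp [has, ha]), ih hst, ih hst]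
    simp_rw [sum_powerset_insert ha, union_insert, sum_add_distrib]

theorem sum_powerset_ite_card_eq {α β : Type*} [AddCommMonoid β] (s : Finset α) (r : ℕ)
    (g : ℕ → β) :
    ∑ t ∈ s.powerset, (if #t = r then g #t else 0) = (#s).choose r • g r := by
  rw [← sum_filter, ← powersetCard_eq_filter, sum_powersetCard]

theorem sti_knnVal_sub_sti (n k i : ℕ) (m : ℕ → Bool) (hk : 1 ≤ k) (hn : i + 3 ≤ n) :
    sti n (knnVal k m) (i + 1) (i + 2) - sti n (knnVal k m) (i + 2) (i + 3) =
      2 / n * (i.choose (k - 1) * ∑ H ∈ (Icc (i + 4) n).powerset,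
          (1 / ((n - 1).choose (k - 1 + #H)) + 1 / ((n - 1).choose (k - 1 + #H + 1)) : ℝ)) *
        (((if m (i + 3) then 1 else 0) - (if m (i + 2) then 1 else 0)) / k) := by
  have hdisj : Disjoint (Icc 1 i) (Icc (i + 4) n) := by
    rw [disjoint_left]; intro x; simp only [mem_Icc]; omega
  have e_ab : Icc 1 n \ {i + 1, i + 2} = insert (i + 3) (Icc 1 i ∪ Icc (i + 4) n) := by
    ext x; simp only [mem_sdiff, mem_Icc, mem_insert, mem_singleton, mem_union]; omega
  have e_bc : Icc 1 n \ {i + 2, i + 3} = insert (i + 1) (Icc 1 i ∪ Icc (i + 4) n) := by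
    ext x; simp only [mem_sdiff, mem_Icc, mem_insert, mem_singleton, mem_union]; omega
  unfold sti
  rw [e_ab, e_bc, sum_powerset_insert (by simp), sum_powerset_insert (by simp), ← sum_add_distrib,
    ← sum_add_distrib, ← mul_sub, ← sum_sub_distrib, sum_powerset_union_of_disjoint hdisj]
  calc _ = 2 / n * ∑ L ∈ (Icc 1 i).powerset, ∑ H ∈ (Icc (i + 4) n).powerset,
        (if #L = k - 1 then
          (1 / ((n - 1).choose (#L + #H)) + 1 / ((n - 1).choose (#L + #H + 1)) : ℝ) else 0) *
          (((if m (i + 3) then 1 else 0) - (if m (i + 2) then 1 else 0)) / k) := by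
        congr 1
        refine sum_congr rfl fun L hL => sum_congr rfl fun H hH => ?_
        rw [mem_powerset] at hL hH
        have hL' : ∀ x ∈ L, x < i + 1 := fun x hx => by
          have := hL hx; simp only [mem_Icc] at this; omega
        have hH' : ∀ y ∈ H, i + 3 < y := fun y hy => by
          have := hH hy; simp only [mem_Icc] at this; omega
        have P₁ := secondDiff_knnVal_sub_secondDiff (k := k) (m := m)
          (by omega : i + 1 < i + 2) (by omega : i + 2 < i + 3) hL' hH'
        have P₂ := secondDiff_knnVal_insert_sub_secondDiff_insert (k := k) (m := m)
          (by omega : i + 1 < i + 2) (by omega : i + 2 < i + 3) hL' hH'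
        rw [card_insert_of_notMem (by grind), card_insert_of_notMem (by grind),
          card_union_of_disjoint (hdisj.mono hL hH)]
        split_ifs at P₁ P₂ ⊢ <;> first
          | linear_combination (1 / ((n - 1).choose (#L + #H)) : ℝ) * P₁ +
              (1 / ((n - 1).choose (#L + #H + 1)) : ℝ) * P₂
          | (exfalso; omega)
    _ = _ := by
        simp_rw [← sum_mul, sum_ite_irrel, sum_const_zero]
        rw [sum_powerset_ite_card_eq _ _ (fun l => ∑ H ∈ (Icc (i + 4) n).powerset,
          (1 / ((n - 1).choose (l + #H)) + 1 / ((n - 1).choose (l + #H + 1)) : ℝ)),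
          Nat.card_Icc, nsmul_eq_mul]
        simp only [add_tsub_cancel_right]
        ring

theorem sum_powerset_Icc_inv_choose_add {n i l : ℕ} (hl : l ≤ i + 1) (hn : i + 3 ≤ n) :
    ∑ H ∈ (Icc (i + 4) n).powerset,
        (1 / ((n - 1).choose (l + #H)) + 1 / ((n - 1).choose (l + #H + 1)) : ℝ) =
      n / ((i + 2) * (i + 1).choose l) := by
  rw [show n - 1 = n - 2 + 1 by omega]
  simp only [one_div]
  rw [sum_powerset_inv_choose_succ_add _ (by simp only [Nat.card_Icc]; omega),
    sum_powerset_inv_choose _ (N := i + 1) (by simp only [Nat.card_Icc]; omega) hl]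
  have : ((i + 1).choose l : ℝ) ≠ 0 := by exact_mod_cast (Nat.choose_pos hl).ne'
  push_cast [Nat.cast_sub (by omega : 2 ≤ n)]
  have : (n : ℝ) - 2 + 1 ≠ 0 := by
    have : (3 : ℝ) ≤ n := by exact_mod_cast hn.trans' (by omega)
    linarith
  field_simp
  ring

theorem sti_knn_recursion_general (n k j : ℕ) (m : ℕ → Bool)
    (hk : 1 ≤ k) (hj3 : 3 ≤ j) (hjn : j ≤ n) :
    (k + 1 < j →
      sti n (knnVal k m) (j - 2) (j - 1) =
        sti n (knnVal k m) (j - 1) j +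
          (2 * ((j : ℝ) - k - 1) / (((j : ℝ) - 2) * ((j : ℝ) - 1))) *
            ((if m j then (1 : ℝ) else 0) / k - (if m (j - 1) then (1 : ℝ) else 0) / k)) ∧
    (j ≤ k + 1 →
      sti n (knnVal k m) (j - 2) (j - 1) = sti n (knnVal k m) (j - 1) j) := by
  obtain ⟨i, rfl⟩ : ∃ i, j = i + 3 := ⟨j - 3, by omega⟩
  obtain ⟨l, rfl⟩ : ∃ l, k = l + 1 := ⟨k - 1, by omega⟩
  have hdiff := sti_knnVal_sub_sti n (l + 1) i m hk hjn
  simp only [add_tsub_cancel_right] at hdiff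
  simp only [show i + 3 - 2 = i + 1 from rfl, show i + 3 - 1 = i + 2 from rfl]
  refine ⟨fun hli => ?_, fun hil => ?_⟩
  · have hchoose : (i.choose l : ℝ) * (i + 1) = (i + 1).choose l * (i + 1 - l) := by
      have := congrArg (Nat.cast : ℕ → ℝ) (Nat.choose_mul_succ_eq i l)
      push_cast [Nat.cast_sub (by omega : l ≤ i + 1)] at this
      exact this
    rw [sum_powerset_Icc_inv_choose_add (by omega) hjn] at hdiff
    have : ((i + 1).choose l : ℝ) ≠ 0 := by exact_mod_cast (Nat.choose_pos (by omega)).ne'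
    have : (n : ℝ) ≠ 0 := by exact_mod_cast (by omega : n ≠ 0)
    push_cast at hdiff ⊢
    rw [← sub_eq_iff_eq_add', hdiff, show (i : ℝ) + 3 - 2 = i + 1 by ring,
      show (i : ℝ) + 3 - 1 = i + 2 by ring, show (i : ℝ) + 3 - (l + 1) - 1 = i + 1 - l by ring]
    field_simp
    rw [mul_right_comm, hchoose, mul_right_comm]
  · rw [Nat.choose_eq_zero_of_lt (by omega : i < l)] at hdiff
    simp only [Nat.cast_zero, zero_mul, mul_zero] at hdiff
    exact sub_eq_zero.1 hdiff

theorem sti_knn_recursion (n k j : ℕ) (m : ℕ → Bool)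
    (hk : 1 ≤ k) (hkn : k ≤ n) (hj3 : 3 ≤ j) (hjn : j ≤ n) :
    (k + 1 < j →
      sti n (knnVal k m) (j - 2) (j - 1) =
        sti n (knnVal k m) (j - 1) j +
          (2 * ((j : ℝ) - k - 1) / (((j : ℝ) - 2) * ((j : ℝ) - 1))) *
            ((if m j then (1 : ℝ) else 0) / k - (if m (j - 1) then (1 : ℝ) else 0) / k)) ∧
    (j ≤ k + 1 →
      sti n (knnVal k m) (j - 2) (j - 1) = sti n (knnVal k m) (j - 1) j) :=
  sti_knn_recursion_general n k j m hk hj3 hjn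
end

section
/- For the KNN valuation function u with parameter k, the Shapley–Taylor interaction matrix has equal entries along each column above the superdiagonal: for a fixed j and any a, b with a < j and b < j, φ_{a,j}(u) = φ_{b,j}(u). -/
/-!
Inserting a point `j` into a coalition `X` changes the `k` nearest neighbours only from the
position of `j` onward, so the marginal contribution `u(X ∪ {j}) - u(X)` depends only on the
number of points of `X` closer than `j` and on the points of `X` farther than `j`. Both are
preserved by the transposition of two points `a, b` closer than `j`; this transposition maps the
coalitions summed over in `φ_{a,j}` bijectively and cardinality-preservingly onto those of
`φ_{b,j}`, matching the second differences term by term.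
-/

open Finset

theorem List.countP_take_append_cons_add_of_length_eq {α : Type*} (p : α → Bool) (k : ℕ)
    (x : α) {L L' : List α} (U : List α) (h : L.length = L'.length) :
    ((L ++ x :: U).take k).countP p + ((L' ++ U).take k).countP p
      = ((L' ++ x :: U).take k).countP p + ((L ++ U).take k).countP p := by
  simp only [List.take_append, List.countP_append, h]
  omega

theorem Finset.sort_filter_lt_append_sort_filter_le {α : Type*} [LinearOrder α]
    (s : Finset α) (a : α) :
    (s.filter (· < a)).sort ++ (s.filter (a ≤ ·)).sort = s.sort := by
  have hnodup : ((s.filter (· < a)).sort ++ (s.filter (a ≤ ·)).sort).Nodup := by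
    refine List.nodup_append.mpr ⟨sort_nodup _ _, sort_nodup _ _, ?_⟩
    simp only [mem_sort, mem_filter]
    rintro x ⟨-, hx⟩ y ⟨-, hy⟩ rfl
    exact (lt_of_lt_of_le hx hy).false
  have hsorted : ((s.filter (· < a)).sort ++ (s.filter (a ≤ ·)).sort).Pairwise (· ≤ ·) := by
    refine List.pairwise_append.mpr ⟨pairwise_sort _ _, pairwise_sort _ _, ?_⟩
    simp only [mem_sort, mem_filter]
    rintro x ⟨-, hx⟩ y ⟨-, hy⟩
    exact (lt_of_lt_of_le hx hy).le
  rw [← (List.toFinset_sort _ hnodup).mpr hsorted, List.toFinset_append, sort_toFinset,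
    sort_toFinset, ← filter_or]
  simp only [lt_or_ge, filter_true]

theorem Finset.sort_insert_eq_append {α : Type*} [LinearOrder α] {s : Finset α} {a : α}
    (ha : a ∉ s) :
    (insert a s).sort = (s.filter (· < a)).sort ++ a :: (s.filter (a ≤ ·)).sort := by
  rw [← sort_filter_lt_append_sort_filter_le (insert a s) a, filter_insert, filter_insert,
    if_neg (lt_irrefl a), if_pos le_rfl, sort_insert]
  · simp
  · simpa using ha

theorem knnVal_insert_sub_knnVal_eq (k : ℕ) (m : ℕ → Bool) {X Y : Finset ℕ} {j : ℕ}
    (hX : j ∉ X) (hY : j ∉ Y) (hlt : #(X.filter (· < j)) = #(Y.filter (· < j)))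
    (hle : X.filter (j ≤ ·) = Y.filter (j ≤ ·)) :
    knnVal k m (insert j X) - knnVal k m X = knnVal k m (insert j Y) - knnVal k m Y := by
  have key := List.countP_take_append_cons_add_of_length_eq m k j (X.filter (j ≤ ·)).sort
    (L := (X.filter (· < j)).sort) (L' := (Y.filter (· < j)).sort) (by simpa using hlt)
  simp only [knnVal, sort_insert_eq_append hX, sort_insert_eq_append hY, ← hle,
    ← sort_filter_lt_append_sort_filter_le X j, ← sort_filter_lt_append_sort_filter_le Y j,
    div_sub_div_same]
  congr 1
  rw [sub_eq_sub_iff_add_eq_add]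
  exact_mod_cast key

theorem knnVal_insert_sub_knnVal_map_perm (k : ℕ) (m : ℕ → Bool) {σ : Equiv.Perm ℕ}
    {j : ℕ} (hσ : ∀ x, j ≤ x → σ x = x) {X : Finset ℕ} (hX : j ∉ X) :
    knnVal k m (insert j (X.map σ.toEmbedding)) - knnVal k m (X.map σ.toEmbedding)
      = knnVal k m (insert j X) - knnVal k m X := by
  have hσ_lt (x : ℕ) : σ x < j ↔ x < j := by
    refine ⟨fun h => ?_, fun h => ?_⟩ <;> by_contra! hge
    · rw [hσ x hge] at h
      exact h.not_ge hge
    · rw [σ.injective (hσ _ hge)] at hge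
      exact h.not_ge hge
  have hσ_symm (x : ℕ) (hx : j ≤ x) : σ.symm x = x := σ.symm_apply_eq.mpr (hσ x hx).symm
  apply knnVal_insert_sub_knnVal_eq k m _ hX
  · rw [filter_map, card_map]
    exact congrArg card (filter_congr fun x _ => hσ_lt x)
  · ext x
    simp only [mem_filter, mem_map_equiv]
    exact and_congr_left fun hx => by rw [hσ_symm x hx]
  · simpa [mem_map_equiv, hσ_symm j le_rfl] using hX

theorem secondDiff_eq_sub (u : Finset ℕ → ℝ) (S : Finset ℕ) (i j : ℕ) :
    secondDiff u S i j
      = (u (insert j (insert i S)) - u (insert i S)) - (u (insert j S) - u S) := by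
  rw [secondDiff, union_comm, union_comm S, union_comm S, ← insert_eq, ← insert_eq,
    insert_union, ← insert_eq, insert_comm]
  ring

theorem secondDiff_knnVal_map_swap (k : ℕ) (m : ℕ → Bool) {a b j : ℕ} (haj : a < j)
    (hbj : b < j) {S : Finset ℕ} (hjS : j ∉ S) :
    secondDiff (knnVal k m) (S.map (Equiv.swap a b).toEmbedding) b j
      = secondDiff (knnVal k m) S a j := by
  have hσ (x : ℕ) (hx : j ≤ x) : Equiv.swap a b x = x :=
    Equiv.swap_apply_of_ne_of_ne (by omega) (by omega)
  have hmap : insert b (S.map (Equiv.swap a b).toEmbedding)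
      = (insert a S).map (Equiv.swap a b).toEmbedding := by
    simp [map_insert]
  rw [secondDiff_eq_sub, secondDiff_eq_sub, hmap,
    knnVal_insert_sub_knnVal_map_perm k m hσ (by simp [hjS, haj.ne']),
    knnVal_insert_sub_knnVal_map_perm k m hσ hjS]

theorem map_swap_sdiff_pair {N : Finset ℕ} {a b j : ℕ} (ha : a ∈ N) (hb : b ∈ N)
    (hja : j ≠ a) (hjb : j ≠ b) :
    (N \ {a, j}).map (Equiv.swap a b).toEmbedding = N \ {b, j} := by
  ext x
  simp only [mem_map_equiv, Equiv.symm_swap, mem_sdiff, mem_insert, mem_singleton,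
    Equiv.swap_apply_def]
  split_ifs <;> subst_vars <;> tauto

theorem sti_knn_columns_equal_general (n k : ℕ) (m : ℕ → Bool) (j a b : ℕ)
    (hjn : j ≤ n) (ha : 1 ≤ a) (hb : 1 ≤ b) (haj : a < j) (hbj : b < j) :
    sti n (knnVal k m) a j = sti n (knnVal k m) b j := by
  have hN := map_swap_sdiff_pair (N := Icc 1 n) (j := j) (mem_Icc.mpr ⟨ha, by omega⟩)
    (mem_Icc.mpr ⟨hb, by omega⟩) haj.ne' hbj.ne'
  rw [sti, sti]
  congr 1
  refine sum_equiv (Equiv.swap a b).finsetCongr (fun S => ?_) (fun S hS => ?_)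
  · rw [← hN, Equiv.finsetCongr_apply, mem_powerset, mem_powerset, map_subset_map]
  · have hjS : j ∉ S := fun h => by simpa using mem_powerset.mp hS h
    rw [Equiv.finsetCongr_apply, card_map, secondDiff_knnVal_map_swap k m haj hbj hjS]

theorem sti_knn_columns_equal (n k : ℕ) (m : ℕ → Bool) (j a b : ℕ)
    (hk : 1 ≤ k) (hkn : k ≤ n) (hjn : j ≤ n)
    (ha : 1 ≤ a) (hb : 1 ≤ b) (haj : a < j) (hbj : b < j) :
    sti n (knnVal k m) a j = sti n (knnVal k m) b j :=
  sti_knn_columns_equal_general n k m j a b hjn ha hb haj hbj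
end

section
/- For nonnegative integers u, v, b with b ≤ u, the identity Σ_{a=0}^{v} C(u,b)·C(v,a)/C(u+v,a+b) = (u+v+1)/(u+1) holds. -/
open Finset

lemma sum_choose_mul_choose (m : ℕ) :
    ∀ p n : ℕ, ∑ k ∈ Finset.range (n + 1), k.choose m * (n - k).choose p
      = (n + 1).choose (m + p + 1) := by
  intro p
  induction p with
  | zero =>
    intro n
    simp only [Nat.choose_zero_right, mul_one, Nat.add_zero]
    rw [← Nat.sum_Icc_choose n m]
    symm
    apply Finset.sum_subset
    · intro k hk
      simp only [Finset.mem_Icc] at hk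
      simp only [Finset.mem_range]
      omega
    · intro k hk hk'
      simp only [Finset.mem_range] at hk
      simp only [Finset.mem_Icc, not_and, not_le] at hk'
      exact Nat.choose_eq_zero_of_lt (by omega)
  | succ p ihp =>
    intro n
    induction n with
    | zero =>
      simp [Nat.choose_eq_zero_of_lt]
    | succ n ihn =>
      rw [Finset.sum_range_succ]
      have h1 : ∀ k ∈ Finset.range (n + 1),
          k.choose m * (n + 1 - k).choose (p + 1)
            = k.choose m * (n - k).choose p + k.choose m * (n - k).choose (p + 1) := by
        intro k hk
        simp only [Finset.mem_range] at hk
        have : n + 1 - k = (n - k) + 1 := by omega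
        rw [this, Nat.choose_succ_succ, Nat.mul_add]
      rw [Finset.sum_congr rfl h1, Finset.sum_add_distrib, ihp n, ihn]
      simp only [Nat.sub_self, Nat.choose_eq_zero_of_lt (by omega : 0 < p + 1), mul_zero,
        add_zero]
      rw [show m + (p + 1) + 1 = (m + p + 1) + 1 from by omega,
        Nat.choose_succ_succ (n + 1) (m + p + 1)]

lemma term_eq (u v b a : ℕ) (hb : b ≤ u) (ha : a ≤ v) :
    ((u.choose b : ℝ) * (v.choose a)) / ((u + v).choose (a + b)) =
      (((a + b).choose b : ℝ) * ((u + v - (a + b)).choose (u - b))) / ((u + v).choose u) := by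
  rw [Nat.cast_choose ℝ hb, Nat.cast_choose ℝ ha,
    Nat.cast_choose ℝ (show a + b ≤ u + v by omega),
    Nat.cast_choose ℝ (show b ≤ a + b by omega),
    Nat.cast_choose ℝ (show u - b ≤ u + v - (a + b) by omega),
    Nat.cast_choose ℝ (show u ≤ u + v by omega),
    show a + b - b = a from by omega,
    show u + v - (a + b) - (u - b) = v - a from by omega,
    show u + v - u = v from by omega]
  have f : ∀ n : ℕ, (Nat.factorial n : ℝ) ≠ 0 :=
    fun n => Nat.cast_ne_zero.2 (Nat.factorial_ne_zero n)
  field_simp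

theorem binomial_ratio_sum (u v b : ℕ) (hb : b ≤ u) :
    ∑ a ∈ Finset.range (v + 1),
        ((u.choose b : ℝ) * (v.choose a)) / ((u + v).choose (a + b)) =
      ((u : ℝ) + v + 1) / ((u : ℝ) + 1) := by
  have hsum : ∀ a ∈ Finset.range (v + 1),
      ((u.choose b : ℝ) * (v.choose a)) / ((u + v).choose (a + b)) =
        (((a + b).choose b : ℝ) * ((u + v - (a + b)).choose (u - b))) / ((u + v).choose u) := by
    intro a ha
    exact term_eq u v b a hb (by simpa [Nat.lt_succ_iff] using ha)
  rw [Finset.sum_congr rfl hsum, ← Finset.sum_div]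
  have hnat : ∑ a ∈ Finset.range (v + 1),
      ((a + b).choose b * ((u + v - (a + b)).choose (u - b)))
      = (u + v + 1).choose (u + 1) := by
    have key := sum_choose_mul_choose b (u - b) (u + v)
    rw [show b + (u - b) + 1 = u + 1 from by omega] at key
    rw [← key]
    rw [show ∑ a ∈ Finset.range (v + 1),
        ((a + b).choose b * ((u + v - (a + b)).choose (u - b)))
        = ∑ k ∈ (Finset.range (v + 1)).map
            ⟨fun a => a + b, add_left_injective b⟩,
            (k.choose b * ((u + v - k).choose (u - b))) from by rw [Finset.sum_map]; rfl]
    apply Finset.sum_subset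
    · intro k hk
      rw [Finset.mem_map] at hk
      obtain ⟨a, ha, rfl⟩ := hk
      rw [Finset.mem_range] at ha
      rw [Finset.mem_range]
      simp only [Function.Embedding.coeFn_mk]
      omega
    · intro k hk hk'
      rw [Finset.mem_range] at hk
      have hk2 : ∀ a : ℕ, a < v + 1 → a + b ≠ k := by
        intro a ha' hak
        exact hk' (Finset.mem_map.2 ⟨a, Finset.mem_range.2 ha', hak⟩)
      by_cases hkb : k < b
      · rw [Nat.choose_eq_zero_of_lt hkb, zero_mul]
      · push_neg at hkb
        have hvk : v + b < k := by
          by_contra h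
          push_neg at h
          exact hk2 (k - b) (by omega) (by omega)
        rw [Nat.choose_eq_zero_of_lt (show u + v - k < u - b by omega), mul_zero]
  have hcast : (∑ a ∈ Finset.range (v + 1),
      (((a + b).choose b : ℝ) * ((u + v - (a + b)).choose (u - b))))
      = (((u + v + 1).choose (u + 1) : ℕ) : ℝ) := by
    rw [← hnat]
    push_cast
    rfl
  rw [hcast]
  have hpos : (0 : ℝ) < ((u + v).choose u : ℝ) := by
    exact_mod_cast Nat.choose_pos (by omega : u ≤ u + v)
  have hkeyR : ((u + v + 1 : ℕ) : ℝ) * ((u + v).choose u : ℝ)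
      = ((u + v + 1).choose (u + 1) : ℝ) * ((u + 1 : ℕ) : ℝ) := by
    exact_mod_cast Nat.add_one_mul_choose_eq (u + v) u
  push_cast at hkeyR
  rw [div_eq_div_iff hpos.ne' (by positivity)]
  linarith [hkeyR]
end

section
/- For integers 2 ≤ k+1 < j ≤ n, the sum D := Σ_{s=k-1}^{n-3} C(j-3,k-1)·C(n-j,s-k+1)·[1/C(n-1,s) + 1/C(n-1,s+1)] equals n(j-k-1)/((j-2)(j-1)). -/
/-!
Expanding `C(p+1,t) = C(p,t) + C(p,t-1)` turns `∑ₜ C(p,t) (1/C(q,t+r) + 1/C(q,t+r+1))` into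
`∑ₜ C(p+1,t) / C(q,t+r)`. The sums `∑ₜ C(p,t) / C(p+m,t+r) = (p+m+1) / ((m+1) C(m,r))` follow by
induction on `p`, the step being the reciprocal identity
`1/C(m+1,r) + 1/C(m+1,r+1) = (m+2) / ((m+1) C(m,r))`. Substituting `s = t + k - 1`, `D` is
`C(j-3,k-1)` times the instance `p = n-j+1`, `m = j-2`, `r = k-1`.
-/

open Finset

theorem cast_choose_mul_succ_eq {m r : ℕ} (h : r ≤ m + 1) :
    (m.choose r : ℝ) * (m + 1) = (m + 1).choose r * (m + 1 - r) := by
  have := congrArg (Nat.cast (R := ℝ)) (Nat.choose_mul_succ_eq m r)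
  push_cast [Nat.cast_sub h] at this
  exact this

theorem inv_choose_succ_add_inv_choose_succ_succ_s9 {m r : ℕ} (h : r ≤ m) :
    ((m + 1).choose r : ℝ)⁻¹ + ((m + 1).choose (r + 1) : ℝ)⁻¹ =
      (m + 2) / ((m + 1) * m.choose r) := by
  have hsucc := cast_choose_mul_succ_eq (m := m) (r := r) (by omega)
  have hsucc_succ : ((m + 1).choose (r + 1) : ℝ) * (r + 1) = (m + 1) * m.choose r := by
    exact_mod_cast (Nat.add_one_mul_choose_eq m r).symm
  have hpos : (m.choose r : ℝ) ≠ 0 := by exact_mod_cast (Nat.choose_pos h).ne'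
  have hpos₁ : ((m + 1).choose r : ℝ) ≠ 0 := by exact_mod_cast (Nat.choose_pos (by omega)).ne'
  have hpos₂ : ((m + 1).choose (r + 1) : ℝ) ≠ 0 := by exact_mod_cast (Nat.choose_pos (by omega)).ne'
  field_simp
  linear_combination ((m + 1).choose (r + 1) : ℝ) * hsucc - ((m + 1).choose r : ℝ) * hsucc_succ

theorem sum_range_choose_succ_mul_inv_choose (p q r : ℕ) :
    ∑ t ∈ range (p + 2), ((p + 1).choose t : ℝ) * (q.choose (t + r) : ℝ)⁻¹ =
      ∑ t ∈ range (p + 1), (p.choose t : ℝ) *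
        ((q.choose (t + r) : ℝ)⁻¹ + (q.choose (t + r + 1) : ℝ)⁻¹) := by
  simp only [sum_choose_succ_mul (fun t _ => (q.choose (t + r) : ℝ)⁻¹), mul_add, sum_add_distrib,
    add_right_comm _ 1 r]

theorem sum_range_choose_mul_inv_choose_add {m r : ℕ} (h : r ≤ m) (p : ℕ) :
    ∑ t ∈ range (p + 1), (p.choose t : ℝ) * ((p + m).choose (t + r) : ℝ)⁻¹ =
      (p + m + 1) / ((m + 1) * m.choose r) := by
  induction p generalizing m r with
  | zero =>
    have hpos : (m.choose r : ℝ) ≠ 0 := by exact_mod_cast (Nat.choose_pos h).ne'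
    simp only [zero_add, range_one, sum_singleton, Nat.choose_self, Nat.cast_one, one_mul,
      Nat.cast_zero]
    field_simp
  | succ p ih =>
    rw [show p + 1 + m = p + (m + 1) by ring, sum_range_choose_succ_mul_inv_choose]
    simp only [mul_add, sum_add_distrib, add_assoc _ r 1]
    rw [ih (by omega : r ≤ m + 1), ih (by omega : r + 1 ≤ m + 1)]
    calc _ = (p + m + 2) / (m + 2) *
            (((m + 1).choose r : ℝ)⁻¹ + ((m + 1).choose (r + 1) : ℝ)⁻¹) := by
          push_cast
          simp only [div_eq_mul_inv, mul_inv]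
          ring
      _ = _ := by
        have hpos : (m.choose r : ℝ) ≠ 0 := by exact_mod_cast (Nat.choose_pos h).ne'
        rw [inv_choose_succ_add_inv_choose_succ_succ_s9 h]
        field_simp
        push_cast
        ring

theorem sum_Icc_choose_sub_mul {R : Type*} [Semiring R] (g : ℕ → R) {p r N : ℕ} (h : p + r ≤ N) :
    ∑ s ∈ Icc r N, (p.choose (s - r) : R) * g s =
      ∑ t ∈ range (p + 1), (p.choose t : R) * g (t + r) := by
  rw [← sum_subset (Icc_subset_Icc_right h)]
  · rw [← Ico_add_one_right_eq_Icc, sum_Ico_eq_sum_range, show p + r + 1 - r = p + 1 by omega]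
    simp only [add_tsub_cancel_right, add_comm r]
  · intro s hs hs'
    simp only [mem_Icc, not_and, not_le] at hs hs'
    rw [Nat.choose_eq_zero_of_lt (by omega), Nat.cast_zero, zero_mul]

theorem sti_knn_coefficient_D (n k j : ℕ)
    (hk : 1 ≤ k) (hj : k + 1 < j) (hjn : j ≤ n) :
    ∑ s ∈ Finset.Icc (k - 1) (n - 3),
        ((j - 3).choose (k - 1) : ℝ) * ((n - j).choose (s + 1 - k)) *
          (1 / ((n - 1).choose s) + 1 / ((n - 1).choose (s + 1))) =
      (n : ℝ) * ((j : ℝ) - k - 1) / (((j : ℝ) - 2) * ((j : ℝ) - 1)) := by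
  have hshift : ∀ s, s + 1 - k = s - (k - 1) := fun s => by omega
  simp only [hshift, mul_assoc, ← mul_sum, one_div]
  rw [sum_Icc_choose_sub_mul _ (by omega : n - j + (k - 1) ≤ n - 3),
    show n - 1 = n - j + 1 + (j - 2) by omega, ← sum_range_choose_succ_mul_inv_choose,
    sum_range_choose_mul_inv_choose_add (by omega : k - 1 ≤ j - 2)]
  have hpascal := cast_choose_mul_succ_eq (m := j - 3) (r := k - 1) (by omega)
  rw [show j - 3 + 1 = j - 2 by omega] at hpascal
  have hj₃ : (3 : ℝ) ≤ j := by exact_mod_cast (by omega : 3 ≤ j)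
  have hj₂ : (j : ℝ) - 2 ≠ 0 := by linarith
  have hj₁ : (j : ℝ) - 1 ≠ 0 := by linarith
  have hpos : ((j - 2).choose (k - 1) : ℝ) ≠ 0 := by exact_mod_cast (Nat.choose_pos (by omega)).ne'
  push_cast [Nat.cast_sub (by omega : 3 ≤ j), Nat.cast_sub (by omega : 2 ≤ j),
    Nat.cast_sub (by omega : 1 ≤ k), Nat.cast_sub hjn] at hpascal ⊢
  rw [show (n : ℝ) - j + 1 + (j - 2) + 1 = n by ring, show (j : ℝ) - 2 + 1 = j - 1 by ring]
  field_simp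
  linear_combination (n : ℝ) * hpascal
end

section
/- For integers with 0 ≤ k-1 ≤ j-3 and j ≤ n, the partial sum D1 := Σ_{s=k-1}^{n-3} C(j-3,k-1)·C(n-j,s-k+1)/C(n-1,s) equals [(j-k)/(j-1)]·[(j-k-1)/(j-2)]·(n/j). -/
open Nat Finset

/-- Dual Vandermonde: `∑_{i=0}^{N} C(i,b) C(N-i,c) = C(N+1, b+c+1)`. -/
lemma dualVandermonde (N : ℕ) : ∀ b c : ℕ,
    ∑ i ∈ range (N + 1), (i.choose b) * ((N - i).choose c) = (N + 1).choose (b + c + 1) := by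
  induction N with
  | zero =>
    intro b c
    rw [Finset.sum_range_one]
    rcases b with _ | b
    · rcases c with _ | c
      · simp
      · rw [Nat.choose_eq_zero_of_lt (show 0 - 0 < c + 1 by omega),
          Nat.choose_eq_zero_of_lt (show 1 < 0 + (c + 1) + 1 by omega), Nat.mul_zero]
    · rw [Nat.choose_eq_zero_of_lt (show 0 < b + 1 by omega),
        Nat.choose_eq_zero_of_lt (show 1 < (b + 1) + c + 1 by omega), Nat.zero_mul]
  | succ N ih =>
    intro b c
    cases c with
    | zero =>
      simp only [Nat.choose_zero_right, Nat.mul_one, Nat.add_zero]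
      rcases le_or_gt b (N + 1) with hb | hb
      · rw [← Nat.sum_Icc_choose (N + 1) b]
        refine (sum_subset ?_ ?_).symm
        · intro x hx; simp only [mem_Icc] at hx; simp only [mem_range]; omega
        · intro x hx hnx
          simp only [mem_range] at hx
          simp only [mem_Icc, not_and, not_le] at hnx
          rcases le_or_gt b x with h | h
          · omega
          · exact Nat.choose_eq_zero_of_lt h
      · rw [Nat.choose_eq_zero_of_lt (by omega)]
        refine Finset.sum_eq_zero fun x hx => ?_
        simp only [mem_range] at hx
        exact Nat.choose_eq_zero_of_lt (by omega)
    | succ c =>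
      rw [sum_range_succ, Nat.sub_self, Nat.choose_eq_zero_of_lt (Nat.succ_pos c), mul_zero,
        add_zero]
      have hcongr : ∀ i ∈ range (N + 1),
          i.choose b * ((N + 1 - i).choose (c + 1)) =
            i.choose b * ((N - i).choose c) + i.choose b * ((N - i).choose (c + 1)) := by
        intro i hi
        simp only [mem_range] at hi
        have h1 : N + 1 - i = (N - i) + 1 := by omega
        rw [h1, Nat.choose_succ_succ, Nat.mul_add]
      rw [sum_congr rfl hcongr, sum_add_distrib, ih b c, ih b (c + 1)]
      have h2 : b + (c + 1) + 1 = (b + c + 1) + 1 := by omega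
      rw [h2, Nat.choose_succ_succ (N + 1) (b + c + 1)]

/-- Factorial identity in ℝ form. -/
lemma chooseProdEq (p q a b : ℕ) :
    (((b + p).choose b : ℝ) * ((a + q).choose a)) * ((a + b + (p + q)).choose (a + q)) =
      (((a + b).choose a : ℝ) * ((p + q).choose q)) * ((a + b + (p + q)).choose (a + b)) := by
  have h1 : ((b + p).choose b : ℝ) = (b + p)! / (b ! * p !) := by
    rw [Nat.cast_choose ℝ (by omega : b ≤ b + p), Nat.add_sub_cancel_left]
  have h2 : ((a + q).choose a : ℝ) = (a + q)! / (a ! * q !) := by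
    rw [Nat.cast_choose ℝ (by omega : a ≤ a + q), Nat.add_sub_cancel_left]
  have h3 : (((a + b + (p + q)).choose (a + q)) : ℝ) =
      (a + b + (p + q))! / ((a + q)! * (b + p)!) := by
    rw [Nat.cast_choose ℝ (by omega : a + q ≤ a + b + (p + q)),
      show a + b + (p + q) - (a + q) = b + p from by omega]
  have h4 : (((a + b).choose a) : ℝ) = (a + b)! / (a ! * b !) := by
    rw [Nat.cast_choose ℝ (by omega : a ≤ a + b), Nat.add_sub_cancel_left]
  have h5 : (((p + q).choose q) : ℝ) = (p + q)! / (q ! * p !) := by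
    rw [Nat.cast_choose ℝ (by omega : q ≤ p + q),
      show p + q - q = p from by omega]
  have h6 : (((a + b + (p + q)).choose (a + b)) : ℝ) =
      (a + b + (p + q))! / ((a + b)! * (p + q)!) := by
    rw [Nat.cast_choose ℝ (by omega : a + b ≤ a + b + (p + q)),
      show a + b + (p + q) - (a + b) = p + q from by omega]
  rw [h1, h2, h3, h4, h5, h6]
  have f1 : (a ! : ℝ) ≠ 0 := Nat.cast_ne_zero.mpr (Nat.factorial_ne_zero a)
  have f2 : (b ! : ℝ) ≠ 0 := Nat.cast_ne_zero.mpr (Nat.factorial_ne_zero b)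
  have f3 : (p ! : ℝ) ≠ 0 := Nat.cast_ne_zero.mpr (Nat.factorial_ne_zero p)
  have f4 : (q ! : ℝ) ≠ 0 := Nat.cast_ne_zero.mpr (Nat.factorial_ne_zero q)
  have f5 : ((a + q)! : ℝ) ≠ 0 := Nat.cast_ne_zero.mpr (Nat.factorial_ne_zero _)
  have f6 : ((b + p)! : ℝ) ≠ 0 := Nat.cast_ne_zero.mpr (Nat.factorial_ne_zero _)
  have f7 : ((a + b)! : ℝ) ≠ 0 := Nat.cast_ne_zero.mpr (Nat.factorial_ne_zero _)
  have f8 : ((p + q)! : ℝ) ≠ 0 := Nat.cast_ne_zero.mpr (Nat.factorial_ne_zero _)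
  field_simp

/-- `∑_{a=0}^{v} C(a+b,a) C(u+v-a-b, v-a) = C(u+v+1, u+1)` for `b ≤ u`. -/
lemma natSumEq (u v b : ℕ) (hb : b ≤ u) :
    ∑ a ∈ range (v + 1), ((a + b).choose a) * ((u + v - (a + b)).choose (v - a)) =
      (u + v + 1).choose (u + 1) := by
  have step1 : ∀ a ∈ range (v + 1),
      ((a + b).choose a) * ((u + v - (a + b)).choose (v - a)) =
        ((a + b).choose b) * ((u + v - (a + b)).choose (u - b)) := by
    intro a ha
    simp only [mem_range] at ha
    have e1 : (a + b).choose a = (a + b).choose b := by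
      rw [← Nat.choose_symm (by omega : b ≤ a + b)]
      congr 1
      omega
    have e2 : (u + v - (a + b)).choose (v - a) = (u + v - (a + b)).choose (u - b) := by
      rw [← Nat.choose_symm (by omega : v - a ≤ u + v - (a + b))]
      congr 1
      omega
    rw [e1, e2]
  rw [sum_congr rfl step1]
  have step2 : ∑ a ∈ range (v + 1), ((a + b).choose b) * ((u + v - (a + b)).choose (u - b)) =
      ∑ i ∈ Ico b (b + (v + 1)), (i.choose b) * ((u + v - i).choose (u - b)) := by
    rw [Finset.sum_Ico_eq_sum_range]
    refine sum_congr (by congr 1; omega) fun a _ => by rw [Nat.add_comm b a]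
  rw [step2]
  have step3 : ∑ i ∈ Ico b (b + (v + 1)), (i.choose b) * ((u + v - i).choose (u - b)) =
      ∑ i ∈ range (u + v + 1), (i.choose b) * ((u + v - i).choose (u - b)) := by
    refine sum_subset ?_ ?_
    · intro x hx; simp only [mem_Ico] at hx; simp only [mem_range]; omega
    · intro x hx hnx
      simp only [mem_range] at hx
      simp only [mem_Ico, not_and, not_lt] at hnx
      rcases lt_or_ge x b with h | h
      · rw [Nat.choose_eq_zero_of_lt h, Nat.zero_mul]
      · have hxx : b + (v + 1) ≤ x := hnx h
        rw [Nat.choose_eq_zero_of_lt (show u + v - x < u - b by omega), Nat.mul_zero]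
  rw [step3, dualVandermonde (u + v) b (u - b)]
  congr 1
  omega

/-- Key sum: `∑_{a=0}^{v} C(u,b) C(v,a) / C(u+v, a+b) = (u+v+1)/(u+1)`. -/
lemma keySum (u v b : ℕ) (hb : b ≤ u) :
    ∑ a ∈ range (v + 1), ((u.choose b : ℝ) * (v.choose a)) / ((u + v).choose (a + b)) =
      ((u : ℝ) + v + 1) / (u + 1) := by
  have hNv : (0 : ℝ) < ((u + v).choose v : ℝ) := by
    exact_mod_cast Nat.choose_pos (by omega : v ≤ u + v)
  have step1 : ∀ a ∈ range (v + 1),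
      ((u.choose b : ℝ) * (v.choose a)) / ((u + v).choose (a + b)) =
        ((((a + b).choose a) * ((u + v - (a + b)).choose (v - a)) : ℕ) : ℝ) /
          ((u + v).choose v) := by
    intro a ha
    simp only [mem_range] at ha
    obtain ⟨p, hp⟩ : ∃ p, u = b + p := ⟨u - b, by omega⟩
    obtain ⟨q, hq⟩ : ∃ q, v = a + q := ⟨v - a, by omega⟩
    have hd1 : (0 : ℝ) < ((u + v).choose (a + b) : ℝ) := by
      exact_mod_cast Nat.choose_pos (by omega : a + b ≤ u + v)
    rw [div_eq_div_iff (ne_of_gt hd1) (ne_of_gt hNv)]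
    push_cast
    subst hp
    subst hq
    rw [show b + p + (a + q) = a + b + (p + q) from by omega]
    rw [show a + b + (p + q) - (a + b) = p + q from by omega,
      show a + q - a = q from by omega,
      show (a + q : ℕ) = a + q from rfl]
    have := chooseProdEq p q a b
    calc ((b + p).choose b : ℝ) * ((a + q).choose a) * ((a + b + (p + q)).choose (a + q))
        = ((a + b).choose a : ℝ) * ((p + q).choose q) * ((a + b + (p + q)).choose (a + b)) :=
          chooseProdEq p q a b
      _ = _ := by ring
  rw [sum_congr rfl step1, ← sum_div, ← Nat.cast_sum, natSumEq u v b hb]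
  have hmul : (u + 1) * (u + v + 1).choose (u + 1) = (u + v + 1) * ((u + v).choose v) := by
    have h := Nat.add_one_mul_choose_eq (u + v) u
    have hsymm : (u + v).choose u = (u + v).choose v := by
      rw [← Nat.choose_symm (by omega : u ≤ u + v)]
      congr 1
      omega
    rw [hsymm] at h
    rw [Nat.mul_comm (u + 1), h, Nat.mul_comm]
  have hu1 : ((u : ℝ) + 1) ≠ 0 := by positivity
  rw [div_eq_div_iff (ne_of_gt hNv) hu1]
  have hc := congrArg (fun x : ℕ => (x : ℝ)) hmul
  push_cast at hc ⊢
  linarith [hc]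

theorem sti_knn_coefficient_D1 (n k j : ℕ)
    (hk : 1 ≤ k) (hj : k + 2 ≤ j) (hjn : j ≤ n) :
    ∑ s ∈ Finset.Icc (k - 1) (n - 3),
        (((j - 3).choose (k - 1) : ℝ) * ((n - j).choose (s + 1 - k))) /
          ((n - 1).choose s) =
      (((j : ℝ) - k) / ((j : ℝ) - 1)) * (((j : ℝ) - k - 1) / ((j : ℝ) - 2)) *
        ((n : ℝ) / j) := by
  rw [← Finset.Ico_add_one_right_eq_Icc, Finset.sum_Ico_eq_sum_range]
  have hrange : n - 3 + 1 - (k - 1) = n - k - 1 := by omega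
  rw [hrange]
  have hre : ∀ a ∈ range (n - k - 1),
      (((j - 3).choose (k - 1) : ℝ) * ((n - j).choose (k - 1 + a + 1 - k))) /
          ((n - 1).choose (k - 1 + a)) =
        (((j - 3).choose (k - 1) : ℝ) * ((n - j).choose a)) / ((n - 1).choose (a + (k - 1))) := by
    intro a _
    have e1 : k - 1 + a + 1 - k = a := by omega
    have e2 : k - 1 + a = a + (k - 1) := by omega
    rw [e1, e2]
  rw [sum_congr rfl hre]
  set b := k - 1 with hb
  have htrunc : ∑ a ∈ range (n - j + 1),
      (((j - 3).choose b : ℝ) * ((n - j).choose a)) / ((n - 1).choose (a + b)) =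
      ∑ a ∈ range (n - k - 1),
      (((j - 3).choose b : ℝ) * ((n - j).choose a)) / ((n - 1).choose (a + b)) := by
    refine sum_subset ?_ ?_
    · intro x hx; simp only [mem_range] at *; omega
    · intro x hx hnx
      simp only [mem_range, not_lt] at hx hnx
      rw [Nat.choose_eq_zero_of_lt (by omega : n - j < x)]
      simp
  rw [← htrunc]
  have hjb3 : b ≤ j - 3 := by omega
  have h1 : (j - 2).choose b * (j - 1) = (j - 1).choose b * (j - 1 - b) := by
    have h := Nat.choose_mul_succ_eq (j - 2) b
    have e : j - 2 + 1 = j - 1 := by omega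
    rw [e] at h
    exact h
  have h2 : (j - 3).choose b * (j - 2) = (j - 2).choose b * (j - 2 - b) := by
    have h := Nat.choose_mul_succ_eq (j - 3) b
    have e : j - 3 + 1 = j - 2 := by omega
    rw [e] at h
    exact h
  have hcoef : ((j - 3).choose b : ℝ) =
      (((j : ℝ) - k) / ((j : ℝ) - 1)) * (((j : ℝ) - k - 1) / ((j : ℝ) - 2)) *
        ((j - 1).choose b : ℝ) := by
    have c1 : ((j - 2).choose b : ℝ) * ((j : ℝ) - 1) = ((j - 1).choose b : ℝ) * ((j : ℝ) - k) := by
      have h := congrArg (fun x : ℕ => (x : ℝ)) h1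
      push_cast at h
      have e1 : ((j - 1 : ℕ) : ℝ) = (j : ℝ) - 1 := by
        rw [Nat.cast_sub (by omega)]; norm_num
      have e2 : ((j - 1 - b : ℕ) : ℝ) = (j : ℝ) - k := by
        have e : j - 1 - b = j - k := by omega
        rw [e, Nat.cast_sub (by omega)]
      rw [e1, e2] at h
      exact h
    have c2 : ((j - 3).choose b : ℝ) * ((j : ℝ) - 2) =
        ((j - 2).choose b : ℝ) * ((j : ℝ) - k - 1) := by
      have h := congrArg (fun x : ℕ => (x : ℝ)) h2
      push_cast at h
      have e1 : ((j - 2 : ℕ) : ℝ) = (j : ℝ) - 2 := by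
        rw [Nat.cast_sub (by omega)]; norm_num
      have e2 : ((j - 2 - b : ℕ) : ℝ) = (j : ℝ) - k - 1 := by
        have e : j - 2 - b = j - (k + 1) := by omega
        rw [e, Nat.cast_sub (by omega)]
        push_cast
        ring
      rw [e1, e2] at h
      exact h
    have hj1 : ((j : ℝ) - 1) ≠ 0 := by
      have : (3 : ℝ) ≤ (j : ℝ) := by exact_mod_cast (by omega : 3 ≤ j)
      nlinarith
    have hj2 : ((j : ℝ) - 2) ≠ 0 := by
      have : (3 : ℝ) ≤ (j : ℝ) := by exact_mod_cast (by omega : 3 ≤ j)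
      nlinarith
    field_simp
    nlinarith [c1, c2]
  have hsum : ∑ a ∈ range (n - j + 1),
      (((j - 3).choose b : ℝ) * ((n - j).choose a)) / ((n - 1).choose (a + b)) =
      (((j : ℝ) - k) / ((j : ℝ) - 1)) * (((j : ℝ) - k - 1) / ((j : ℝ) - 2)) *
        ∑ a ∈ range (n - j + 1),
          (((j - 1).choose b : ℝ) * ((n - j).choose a)) / ((n - 1).choose (a + b)) := by
    rw [mul_sum]
    refine sum_congr rfl fun a _ => ?_
    rw [hcoef]
    ring
  rw [hsum]
  have hkey := keySum (j - 1) (n - j) b (by omega)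
  rw [show (j - 1) + (n - j) = n - 1 from by omega] at hkey
  rw [hkey]
  have e1 : ((j - 1 : ℕ) : ℝ) = (j : ℝ) - 1 := by
    rw [Nat.cast_sub (by omega)]; norm_num
  have e2 : ((n - j : ℕ) : ℝ) = (n : ℝ) - j := by
    rw [Nat.cast_sub (by omega)]
  rw [e1, e2]
  have efin : ((j : ℝ) - 1 + ((n : ℝ) - (j : ℝ)) + 1) / ((j : ℝ) - 1 + 1) = (n : ℝ) / (j : ℝ) := by
    congr 1 <;> ring
  rw [efin]
end

section
/- For integers with k ≥ 1, j ≥ k+2, j ≤ n, the partial sum D2 := Σ_{s=k-1}^{n-3} C(j-3,k-1)·C(n-j,s-k+1)/C(n-1,s+1) equals [k/(j-1)]·[(j-k-1)/(j-2)]·(n/j). -/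
/-!
Substituting `k = c + 1`, `j = m + 3`, `n = m + 3 + v` and `s = a + c`, the sum becomes
`C(m, c) · Σ_{a ≤ v} C(v, a) / C(m + 2 + v, a + c + 1)`, and the identity
`Σ_{a ≤ v} C(v, a) / C(u + v, a + b) = (u + v + 1) / ((u + 1) C(u, b))` evaluates the inner sum.
That identity follows by induction on `v`: Pascal's rule splits the sum for `v + 1` into the sums
for `(v, u + 1, b)` and `(v, u + 1, b + 1)`, and `1 / C(u + 1, b) + 1 / C(u + 1, b + 1)`
collapses to `(u + 2) / ((u + 1) C(u, b))`. What remains is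
`C(m, c) / C(m + 2, c + 1) = (c + 1) (m + 1 - c) / ((m + 1) (m + 2))`.
-/

open Finset

theorem Finset.sum_range_succ_choose_nsmul {M : Type*} [AddCommMonoid M] (v : ℕ) (f : ℕ → M) :
    ∑ a ∈ range (v + 1 + 1), (v + 1).choose a • f a =
      ∑ a ∈ range (v + 1), v.choose a • (f a + f (a + 1)) := by
  have hshift : ∑ a ∈ range (v + 1), v.choose (a + 1) • f (a + 1) + f 0 =
      ∑ a ∈ range (v + 1), v.choose a • f a := by
    rw [sum_range_succ, Nat.choose_succ_self, zero_nsmul, add_zero, sum_range_succ' _ v,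
      Nat.choose_zero_right, one_nsmul]
  rw [sum_range_succ', Nat.choose_zero_right, one_nsmul]
  simp only [Nat.choose_succ_succ', add_nsmul, sum_add_distrib, nsmul_add]
  rw [add_assoc, hshift, add_comm]

theorem Nat.choose_mul_add_two_eq (m c : ℕ) (hc : c ≤ m + 1) :
    (m.choose c : ℝ) * ((m + 1) * (m + 2)) = (m + 2).choose (c + 1) * ((c + 1) * (m + 1 - c)) := by
  have hdown : ((m + 1 : ℕ) : ℝ) * m.choose c = (m + 1).choose (c + 1) * (c + 1) := by
    exact_mod_cast Nat.add_one_mul_choose_eq m c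
  have hup : ((m + 1).choose (c + 1) : ℝ) * (m + 2) = (m + 2).choose (c + 1) * (m + 1 - c) := by
    have h := Nat.choose_mul_succ_eq (m + 1) (c + 1)
    rw [show m + 1 + 1 - (c + 1) = m + 1 - c by omega] at h
    have h' : (((m + 1).choose (c + 1) * (m + 1 + 1) : ℕ) : ℝ) =
        (((m + 1 + 1).choose (c + 1) * (m + 1 - c) : ℕ) : ℝ) := congrArg _ h
    push_cast [Nat.cast_sub hc] at h'
    linear_combination h'
  push_cast at hdown
  linear_combination (m + 2 : ℝ) * hdown + (c + 1 : ℝ) * hup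

theorem Nat.inv_choose_succ_add_inv_choose_succ_succ {u b : ℕ} (hb : b ≤ u) :
    ((u + 1).choose b : ℝ)⁻¹ + ((u + 1).choose (b + 1) : ℝ)⁻¹ =
      (u + 2) / ((u + 1) * u.choose b) := by
  have hleft : (u.choose b : ℝ) * (u + 1) = (u + 1).choose b * (u + 1 - b) := by
    have h : ((u.choose b * (u + 1) : ℕ) : ℝ) = (((u + 1).choose b * (u + 1 - b) : ℕ) : ℝ) :=
      congrArg _ (Nat.choose_mul_succ_eq u b)
    push_cast [Nat.cast_sub (by omega : b ≤ u + 1)] at h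
    exact h
  have hright : ((u + 1 : ℕ) : ℝ) * u.choose b = (u + 1).choose (b + 1) * (b + 1) := by
    exact_mod_cast Nat.add_one_mul_choose_eq u b
  push_cast at hright
  have h0 : (u.choose b : ℝ) ≠ 0 := by exact_mod_cast (Nat.choose_pos hb).ne'
  have h1 : ((u + 1).choose b : ℝ) ≠ 0 := by exact_mod_cast (Nat.choose_pos (by omega)).ne'
  have h2 : ((u + 1).choose (b + 1) : ℝ) ≠ 0 := by exact_mod_cast (Nat.choose_pos (by omega)).ne'
  field_simp
  linear_combination ((u + 1).choose (b + 1) : ℝ) * hleft + ((u + 1).choose b : ℝ) * hright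

theorem Nat.sum_range_choose_div_choose_add (v : ℕ) {u b : ℕ} (hb : b ≤ u) :
    ∑ a ∈ range (v + 1), (v.choose a : ℝ) / (u + v).choose (a + b) =
      (u + v + 1) / ((u + 1) * u.choose b) := by
  induction v generalizing u b with
  | zero =>
    have h0 : (u.choose b : ℝ) ≠ 0 := by exact_mod_cast (Nat.choose_pos hb).ne'
    simp only [zero_add, range_one, sum_singleton, Nat.choose_zero_right, add_zero,
      Nat.cast_one, Nat.cast_zero]
    field_simp
  | succ v ih =>
    have hpascal := sum_range_succ_choose_nsmul v (fun a => ((u + 1 + v).choose (a + b) : ℝ)⁻¹)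
    simp only [nsmul_eq_mul, ← div_eq_mul_inv, mul_add, sum_add_distrib] at hpascal
    simp only [show ∀ a, a + 1 + b = a + (b + 1) from fun a => by omega] at hpascal
    rw [show u + (v + 1) = u + 1 + v by omega, hpascal, ih (by omega : b ≤ u + 1),
      ih (by omega : b + 1 ≤ u + 1)]
    calc _ = ((u + v + 2) / (u + 2) : ℝ) * (((u + 1).choose b : ℝ)⁻¹
            + ((u + 1).choose (b + 1) : ℝ)⁻¹) := by
          push_cast
          simp only [div_eq_mul_inv, mul_inv]
          ring
      _ = _ := by
        rw [inv_choose_succ_add_inv_choose_succ_succ hb]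
        field_simp
        push_cast
        ring

theorem sti_knn_coefficient_D2 (n k j : ℕ)
    (hk : 1 ≤ k) (hj : k + 2 ≤ j) (hjn : j ≤ n) :
    ∑ s ∈ Finset.Icc (k - 1) (n - 3),
        (((j - 3).choose (k - 1) : ℝ) * ((n - j).choose (s + 1 - k))) /
          ((n - 1).choose (s + 1)) =
      ((k : ℝ) / ((j : ℝ) - 1)) * (((j : ℝ) - k - 1) / ((j : ℝ) - 2)) *
        ((n : ℝ) / j) := by
  obtain ⟨c, rfl⟩ : ∃ c, k = c + 1 := ⟨k - 1, by omega⟩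
  obtain ⟨m, rfl⟩ : ∃ m, j = m + 3 := ⟨j - 3, by omega⟩
  obtain ⟨v, rfl⟩ : ∃ v, n = m + 3 + v := ⟨n - (m + 3), by omega⟩
  have hsum : ∑ s ∈ Icc c (m + v), ((m.choose c : ℝ) * v.choose (s - c)) /
        (m + 2 + v).choose (s + 1) =
      m.choose c * ∑ a ∈ range (v + 1), (v.choose a : ℝ) / (m + 2 + v).choose (a + (c + 1)) := by
    rw [← Ico_add_one_right_eq_Icc, sum_Ico_eq_sum_range, mul_sum]
    refine (sum_subset (range_subset_range.2 (by omega)) fun a _ ha => ?_).symm.trans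
      (sum_congr rfl fun a _ => ?_).symm
    · rw [Nat.add_sub_cancel_left, Nat.choose_eq_zero_of_lt (by simpa using ha : v < a)]
      simp
    · rw [Nat.add_sub_cancel_left, show c + a + 1 = a + (c + 1) by omega, mul_div_assoc]
  simp only [Nat.add_sub_cancel, Nat.add_sub_cancel_left, Nat.add_sub_add_right,
    show m + 3 + v - 3 = m + v by omega, show m + 3 + v - 1 = m + 2 + v by omega]
  rw [hsum, Nat.sum_range_choose_div_choose_add v (by omega : c + 1 ≤ m + 2)]
  have hchoose := Nat.choose_mul_add_two_eq m c (by omega)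
  have hpos : ((m + 2).choose (c + 1) : ℝ) ≠ 0 := by exact_mod_cast (Nat.choose_pos (by omega)).ne'
  rw [show ((m + 3 : ℕ) : ℝ) - 1 = m + 2 by push_cast; ring,
    show ((m + 3 : ℕ) : ℝ) - 2 = m + 1 by push_cast; ring,
    show ((m + 3 : ℕ) : ℝ) - (c + 1 : ℕ) - 1 = m + 1 - c by push_cast; ring]
  push_cast
  field_simp
  linear_combination (m + 3 + v : ℝ) * (m + 3) * hchoose
end
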